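/- arXiv:1905.00238 — 3 statements merged into one kernel-verified Lean document; each statement's English description precedes it below -/
import Mathlib

section
/- Let μ ∈ ℝ and σ > 0, let f(y) = (1/(σ√(2π)))·exp(−(y − μ)²/(2σ²)) be the Gaussian density with mean μ and variance σ², and for n ∈ ℕ define the truncated generalized moments μ_n = ∫_{−1}^{1} T_n(y) f(y) dy, where T_n is the n-th Chebyshev polynomial of the first kind. Then μ_0 = F(1) − F(−1) where F is the Gaussian cumulative distribution function, μ_1 = μ·μ_0 − σ²·(f(1) − f(−1)), and for every n ≥ 1 the recursion μ_{n+1} = 2μ·μ_n − 2σ²·( f(1) − f(−1)·T_n(−1) − 2n·Σ'_{j=0}^{n−1} μ_j·1_{(n−1+j) mod 2 = 0} ) − μ_{n−1} holds, where Σ' indicates that the j = 0 summand of the sum is multiplied by 1/2 (this is the paper's Proposition on truncated moments, with the sum equal to μ'_n = ∫_{−1}^{1} T_n'(y) f(y) dy divided by 2n). -/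
/-!
The Gaussian density satisfies Stein's equation `σ² f' = (μ - y) f`, so integrating by parts on
`[-1, 1]` gives `∫ y P f = μ ∫ P f - σ² (P(1) f(1) - P(-1) f(-1) - ∫ P' f)` for every
polynomial `P`. Taking `P = T_n` and using `2 y T_n = T_{n+1} + T_{n-1}` and `T_n(1) = 1`
expresses `μ_{n+1}` through `μ_n`, `μ_{n-1}`, boundary values and `∫ T_n' f`. The last term is a
combination of lower moments because `T_n' = n U_{n-1}` and `U_{n-1} = 2 Σ' T_j`, summed over
`j < n` with `j ≡ n - 1 (mod 2)`.
-/

open Polynomial MeasureTheory ProbabilityTheory Set Real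

namespace Polynomial.Chebyshev

theorem U_sub_one_eq_sum_T (R : Type*) [CommRing R] (n : ℕ) :
    U R ((n : ℤ) - 1) = ∑ j ∈ Finset.range n,
      if (n - 1 + j) % 2 = 0 then (if j = 0 then 1 else 2) * T R j else 0 := by
  induction n using Nat.twoStepInduction with
  | zero => simp
  | one => simp
  | more n ih _ =>
    have hU : U R ((n + 2 : ℕ) - 1 : ℤ) = 2 * T R (n + 1 : ℕ) + U R ((n : ℤ) - 1) := by
      convert U_eq_two_mul_T_add_U R ((n : ℤ) - 1) using 2 <;> push_cast <;> ring_nf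
    have hsum : (∑ j ∈ Finset.range n,
        if (n + 2 - 1 + j) % 2 = 0 then (if j = 0 then 1 else 2) * T R j else 0) =
        ∑ j ∈ Finset.range n,
          if (n - 1 + j) % 2 = 0 then (if j = 0 then (1 : R[X]) else 2) * T R j else 0 :=
      Finset.sum_congr rfl fun j hj => by
        rw [show (n + 2 - 1 + j) % 2 = (n - 1 + j) % 2 by have := Finset.mem_range.mp hj; omega]
    rw [hU, ih, Finset.sum_range_succ, Finset.sum_range_succ, hsum, if_neg (by omega),
      if_pos (by omega), if_neg (by omega)]
    ring

end Polynomial.Chebyshev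

noncomputable def chebyshevMoment (f : ℝ → ℝ) (n : ℕ) : ℝ :=
  ∫ y in (-1 : ℝ)..1, (Chebyshev.T ℝ n).eval y * f y

section ChebyshevMoment

variable {f : ℝ → ℝ}

theorem intervalIntegrable_eval_mul (P : ℝ[X]) {a b : ℝ} (hf : IntervalIntegrable f volume a b) :
    IntervalIntegrable (fun y => P.eval y * f y) volume a b :=
  hf.continuousOn_mul P.continuous.continuousOn

theorem chebyshevMoment_add_two (hf : IntervalIntegrable f volume (-1) 1) (n : ℕ) :
    chebyshevMoment f (n + 2) =
      2 * (∫ y in (-1 : ℝ)..1, y * (Chebyshev.T ℝ (n + 1 : ℕ)).eval y * f y)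
        - chebyshevMoment f n := by
  have hT : Chebyshev.T ℝ (n + 2 : ℕ) = 2 * X * Chebyshev.T ℝ (n + 1 : ℕ) - Chebyshev.T ℝ n := by
    push_cast
    exact Chebyshev.T_add_two ℝ n
  rw [chebyshevMoment, chebyshevMoment, ← intervalIntegral.integral_const_mul,
    ← intervalIntegral.integral_sub]
  · refine intervalIntegral.integral_congr fun y _ => ?_
    simp only [hT, eval_sub, eval_mul, eval_X, eval_ofNat]
    ring
  · exact (intervalIntegrable_eval_mul (2 * X * Chebyshev.T ℝ (n + 1 : ℕ)) hf).congr
      fun y _ => by simp only [eval_mul, eval_X, eval_ofNat]; ring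
  · exact intervalIntegrable_eval_mul _ hf

theorem integral_derivative_T_mul_eq_sum_chebyshevMoment (hf : IntervalIntegrable f volume (-1) 1)
    (n : ℕ) :
    ∫ y in (-1 : ℝ)..1, (Chebyshev.T ℝ n).derivative.eval y * f y =
      2 * n * ∑ j ∈ Finset.range n,
        (if j = 0 then (1 : ℝ) / 2 else 1) * chebyshevMoment f j *
          (if (n - 1 + j) % 2 = 0 then (1 : ℝ) else 0) := by
  have hpoint : ∀ y, (Chebyshev.T ℝ n).derivative.eval y * f y =
      ∑ j ∈ Finset.range n, 2 * n * ((if j = 0 then (1 : ℝ) / 2 else 1) *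
        (if (n - 1 + j) % 2 = 0 then (1 : ℝ) else 0)) * ((Chebyshev.T ℝ j).eval y * f y) := by
    intro y
    rw [Chebyshev.T_derivative_eq_U, Chebyshev.U_sub_one_eq_sum_T, eval_mul, eval_finsetSum,
      Finset.mul_sum, Finset.sum_mul]
    refine Finset.sum_congr rfl fun j _ => ?_
    split_ifs <;> simp <;> ring
  simp_rw [hpoint]
  rw [intervalIntegral.integral_finsetSum fun j _ =>
    (intervalIntegrable_eval_mul _ hf).const_mul _, Finset.mul_sum]
  refine Finset.sum_congr rfl fun j _ => ?_
  rw [intervalIntegral.integral_const_mul, chebyshevMoment]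
  ring

end ChebyshevMoment

theorem integral_id_mul_mul_eq_of_stein {u u' f f' : ℝ → ℝ} {a b m v : ℝ}
    (hu : ∀ x ∈ uIcc a b, HasDerivAt u (u' x) x) (hf : ∀ x ∈ uIcc a b, HasDerivAt f (f' x) x)
    (hu' : IntervalIntegrable u' volume a b) (hf' : IntervalIntegrable f' volume a b)
    (hstein : ∀ x ∈ uIcc a b, v * f' x = (m - x) * f x) :
    ∫ x in a..b, x * u x * f x =
      m * (∫ x in a..b, u x * f x)
        - v * (u b * f b - u a * f a - ∫ x in a..b, u' x * f x) := by
  have hu_cont : ContinuousOn u (uIcc a b) := fun x hx =>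
    (hu x hx).continuousAt.continuousWithinAt
  have hf_cont : ContinuousOn f (uIcc a b) := fun x hx =>
    (hf x hx).continuousAt.continuousWithinAt
  have hint : IntervalIntegrable (fun x => u x * f x) volume a b :=
    (hu_cont.mul hf_cont).intervalIntegrable
  calc ∫ x in a..b, x * u x * f x
      = ∫ x in a..b, (m * (u x * f x) - v * (u x * f' x)) :=
        intervalIntegral.integral_congr fun x hx => by linear_combination u x * hstein x hx
    _ = m * (∫ x in a..b, u x * f x)
        - v * (u b * f b - u a * f a - ∫ x in a..b, u' x * f x) := by
      rw [intervalIntegral.integral_sub (hint.const_mul m)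
          ((hf'.continuousOn_mul hu_cont).const_mul v), intervalIntegral.integral_const_mul,
        intervalIntegral.integral_const_mul,
        intervalIntegral.integral_mul_deriv_eq_deriv_mul hu hf hu' hf']

namespace ProbabilityTheory

theorem hasDerivAt_gaussianPDFReal (μ : ℝ) (v : NNReal) (x : ℝ) :
    HasDerivAt (gaussianPDFReal μ v) (-(x - μ) / v * gaussianPDFReal μ v x) x := by
  have hexponent : HasDerivAt (fun x => -(x - μ) ^ 2 / (2 * v)) (-(x - μ) / v) x := by
    have := (((hasDerivAt_id x).sub_const μ).pow 2).neg.div_const (2 * (v : ℝ))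
    refine this.congr_deriv ?_
    rw [show -((2 : ℕ) * (id x - μ) ^ (2 - 1) * 1) = 2 * -(x - μ) by simp; ring,
      mul_div_mul_left _ _ two_ne_zero]
  refine (hexponent.exp.const_mul (√(2 * π * v))⁻¹).congr_deriv ?_
  rw [gaussianPDFReal_def]
  ring

@[fun_prop]
theorem continuous_gaussianPDFReal (μ : ℝ) (v : NNReal) : Continuous (gaussianPDFReal μ v) :=
  continuous_iff_continuousAt.2 fun x => (hasDerivAt_gaussianPDFReal μ v x).continuousAt

theorem integral_id_mul_eval_mul_gaussianPDFReal (μ : ℝ) {v : NNReal} (hv : v ≠ 0) (P : ℝ[X])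
    (a b : ℝ) :
    ∫ x in a..b, x * P.eval x * gaussianPDFReal μ v x =
      μ * (∫ x in a..b, P.eval x * gaussianPDFReal μ v x)
        - v * (P.eval b * gaussianPDFReal μ v b - P.eval a * gaussianPDFReal μ v a
          - ∫ x in a..b, P.derivative.eval x * gaussianPDFReal μ v x) := by
  have hv' : (v : ℝ) ≠ 0 := NNReal.coe_ne_zero.2 hv
  refine integral_id_mul_mul_eq_of_stein (fun x _ => P.hasDerivAt x)
    (fun x _ => hasDerivAt_gaussianPDFReal μ v x) (P.derivative.continuous.intervalIntegrable a b)
    ((by fun_prop : Continuous fun x => -(x - μ) / v * gaussianPDFReal μ v x).intervalIntegrable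
      a b) fun x _ => ?_
  field_simp
  ring

theorem gaussianPDFReal_toNNReal_sq {σ : ℝ} (hσ : 0 < σ) (μ x : ℝ) :
    gaussianPDFReal μ (σ ^ 2).toNNReal x =
      1 / (σ * √(2 * π)) * exp (-(x - μ) ^ 2 / (2 * σ ^ 2)) := by
  rw [gaussianPDFReal_def, Real.coe_toNNReal _ (sq_nonneg σ), mul_comm (2 * π),
    sqrt_mul (sq_nonneg σ), sqrt_sq hσ.le, one_div]

end ProbabilityTheory

/-- The truncated generalized moments `μ_n = ∫_{-1}^{1} T_n(y) f(y) dy` of a Gaussian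
density `f` with mean `μ` and variance `σ²` satisfy the initial values
`μ_0 = F(1) - F(-1)`, `μ_1 = μ·μ_0 - σ²·(f(1) - f(-1))` and, for `n ≥ 1`, the recursion
from the paper's proposition on truncated moments. -/
theorem truncated_chebyshev_moments_recursion
    (μ σ : ℝ) (hσ : 0 < σ)
    (f : ℝ → ℝ)
    (hf : ∀ y, f y = (1 / (σ * Real.sqrt (2 * Real.pi))) *
      Real.exp (-(y - μ) ^ 2 / (2 * σ ^ 2)))
    (F : ℝ → ℝ) (hF : ∀ x, F x = ∫ y in Set.Iic x, f y)
    (M : ℕ → ℝ)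
    (hM : ∀ n : ℕ, M n = ∫ y in (-1 : ℝ)..1, (Polynomial.Chebyshev.T ℝ (n : ℤ)).eval y * f y) :
    M 0 = F 1 - F (-1) ∧
    M 1 = μ * M 0 - σ ^ 2 * (f 1 - f (-1)) ∧
    ∀ n : ℕ, 1 ≤ n →
      M (n + 1) = 2 * μ * M n
        - 2 * σ ^ 2 * (f 1 - f (-1) * (Polynomial.Chebyshev.T ℝ (n : ℤ)).eval (-1)
          - 2 * (n : ℝ) * ∑ j ∈ Finset.range n,
              (if j = 0 then (1 : ℝ) / 2 else 1) * M j *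
                (if (n - 1 + j) % 2 = 0 then (1 : ℝ) else 0))
        - M (n - 1) := by
  have hv : (σ ^ 2).toNNReal ≠ 0 := by simpa using hσ.ne'
  obtain rfl : f = gaussianPDFReal μ (σ ^ 2).toNNReal :=
    funext fun y => (hf y).trans (gaussianPDFReal_toNNReal_sq hσ μ y).symm
  obtain rfl : M = chebyshevMoment (gaussianPDFReal μ (σ ^ 2).toNNReal) := funext hM
  have hint : IntervalIntegrable (gaussianPDFReal μ (σ ^ 2).toNNReal) volume (-1) 1 :=
    (continuous_gaussianPDFReal _ _).intervalIntegrable _ _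
  have hstein := fun P => integral_id_mul_eval_mul_gaussianPDFReal μ hv P (-1) 1
  rw [Real.coe_toNNReal _ (sq_nonneg σ)] at hstein
  refine ⟨?_, ?_, fun n hn => ?_⟩
  · rw [hF, hF, intervalIntegral.integral_Iic_sub_Iic (integrable_gaussianPDFReal _ _).integrableOn
      (integrable_gaussianPDFReal _ _).integrableOn]
    simp [chebyshevMoment]
  · simpa [chebyshevMoment] using hstein 1
  · obtain ⟨m, rfl⟩ := Nat.exists_eq_add_of_le' hn
    rw [chebyshevMoment_add_two hint, hstein, Chebyshev.T_eval_one, ← chebyshevMoment.eq_1,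
      integral_derivative_T_mul_eq_sum_chebyshevMoment hint]
    simp only [add_tsub_cancel_right]
    ring
end

section
/- Let μ ∈ ℝ and σ > 0, let f be the Gaussian density with mean μ and variance σ², and define μ_n = ∫_{−1}^{1} T_n(y) f(y) dy and μ'_n = ∫_{−1}^{1} T_n'(y) f(y) dy, where T_n is the n-th Chebyshev polynomial of the first kind and T_n' its derivative. Then for every n ∈ ℕ, ∫_{−1}^{1} y·T_n(y)·f(y) dy = μ·μ_n − σ²·( T_n(1)·f(1) − T_n(−1)·f(−1) − μ'_n ). -/
/-!
The Gaussian density satisfies `f' = -((y - μ) / σ²) f`, so `y f = μ f - σ² f'`. Multiplying by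
`T_n` and integrating `T_n f'` by parts over `[-1, 1]` gives the identity.
-/

open Polynomial MeasureTheory Interval

theorem hasDerivAt_const_mul_exp_neg_sq_div (c μ s x : ℝ) :
    HasDerivAt (fun y => c * Real.exp (-(y - μ) ^ 2 / (2 * s)))
      (-((x - μ) / s) * (c * Real.exp (-(x - μ) ^ 2 / (2 * s)))) x := by
  have hexponent : HasDerivAt (fun y : ℝ => -(y - μ) ^ 2 / (2 * s)) (-((x - μ) / s)) x := by
    refine ((((hasDerivAt_id x).sub_const μ).pow 2).neg.div_const (2 * s)).congr_deriv ?_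
    rw [id, neg_div, Nat.cast_ofNat, pow_one, mul_one, mul_div_mul_left _ _ two_ne_zero]
  exact (hexponent.exp.const_mul c).congr_deriv (by ring)

/-- Stein's identity on `[a, b]`: the hypothesis on `f` says that it is a multiple of the
`N(μ, s)` density there. -/
theorem integral_id_mul_mul_eq_of_hasDerivAt {p p' f : ℝ → ℝ} {μ s a b : ℝ} (hs : s ≠ 0)
    (hp : ∀ x ∈ [[a, b]], HasDerivAt p (p' x) x) (hp' : IntervalIntegrable p' volume a b)
    (hf : ∀ x ∈ [[a, b]], HasDerivAt f (-((x - μ) / s) * f x) x) :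
    ∫ x in a..b, x * p x * f x =
      μ * (∫ x in a..b, p x * f x) - s * (p b * f b - p a * f a - ∫ x in a..b, p' x * f x) := by
  have hp_cont : ContinuousOn p [[a, b]] := fun x hx => (hp x hx).continuousAt.continuousWithinAt
  have hf_cont : ContinuousOn f [[a, b]] := fun x hx => (hf x hx).continuousAt.continuousWithinAt
  have hf'_cont : ContinuousOn (fun x => -((x - μ) / s) * f x) [[a, b]] := by
    fun_prop
  have hparts : ∫ x in a..b, p x * (-((x - μ) / s) * f x) =
      p b * f b - p a * f a - ∫ x in a..b, p' x * f x :=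
    intervalIntegral.integral_mul_deriv_eq_deriv_mul hp hf hp' hf'_cont.intervalIntegrable
  have hpointwise : (fun x => x * p x * f x) =
      fun x => μ * (p x * f x) - s * (p x * (-((x - μ) / s) * f x)) := by
    funext x
    field_simp
    ring
  rw [hpointwise, intervalIntegral.integral_sub, intervalIntegral.integral_const_mul,
    intervalIntegral.integral_const_mul, hparts]
  · exact ((hp_cont.mul hf_cont).intervalIntegrable).const_mul μ
  · exact ((hp_cont.mul hf'_cont).intervalIntegrable).const_mul s

/-- Integration-by-parts identity for the truncated generalized moments:
`∫_{-1}^{1} y·T_n(y)·f(y) dy = μ·μ_n - σ²·(T_n(1)·f(1) - T_n(-1)·f(-1) - μ'_n)`. -/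
theorem truncated_chebyshev_moment_mul_id
    (μ σ : ℝ) (hσ : 0 < σ)
    (f : ℝ → ℝ)
    (hf : ∀ y, f y = (1 / (σ * Real.sqrt (2 * Real.pi))) *
      Real.exp (-(y - μ) ^ 2 / (2 * σ ^ 2)))
    (M M' : ℕ → ℝ)
    (hM : ∀ n : ℕ, M n = ∫ y in (-1 : ℝ)..1, (Polynomial.Chebyshev.T ℝ (n : ℤ)).eval y * f y)
    (hM' : ∀ n : ℕ, M' n =
      ∫ y in (-1 : ℝ)..1, (Polynomial.derivative (Polynomial.Chebyshev.T ℝ (n : ℤ))).eval y * f y)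
    (n : ℕ) :
    (∫ y in (-1 : ℝ)..1, y * (Polynomial.Chebyshev.T ℝ (n : ℤ)).eval y * f y) =
      μ * M n - σ ^ 2 * ((Polynomial.Chebyshev.T ℝ (n : ℤ)).eval 1 * f 1
        - (Polynomial.Chebyshev.T ℝ (n : ℤ)).eval (-1) * f (-1) - M' n) := by
  have hf_deriv : ∀ x, HasDerivAt f (-((x - μ) / σ ^ 2) * f x) x := by
    obtain rfl : f = _ := funext hf
    exact hasDerivAt_const_mul_exp_neg_sq_div _ μ _
  set T := Polynomial.Chebyshev.T ℝ (n : ℤ)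
  rw [hM n, hM' n]
  exact integral_id_mul_mul_eq_of_hasDerivAt (pow_ne_zero 2 hσ.ne') (fun x _ => T.hasDerivAt x)
    (T.derivative.continuous.intervalIntegrable _ _) (fun x _ => hf_deriv x)
end

section
/- (Interpolation property of the Chebyshev coefficient formula.) Let N ≥ 1 be a natural number, let z_k = cos(πk/N) for k = 0, …, N be the Chebyshev points, and let f : [−1,1] → ℝ. Define the coefficients c_j = (2^{1_{0<j<N}}/N)·Σ''_{k=0}^{N} f(z_k)·T_j(z_k) for j = 0, …, N, where Σ'' indicates that the k = 0 and k = N summands are multiplied by 1/2, and where the factor 2^{1_{0<j<N}} equals 2 if 0 < j < N and 1 if j = 0 or j = N. Then the polynomial I_N(f)(z) = Σ_{j=0}^{N} c_j·T_j(z) interpolates f at the Chebyshev points, i.e., Σ_{j=0}^{N} c_j·T_j(z_m) = f(z_m) for every m = 0, …, N. -/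
open Polynomial Real

/-!
Writing `z_k = cos θ_k` with `θ_k = πk/N`, the identity `T_j(cos θ) = cos(jθ)` turns the claim
into the discrete orthogonality of `j ↦ cos(jθ_k)`, `k = 0, …, N`, for the trapezoidal weights
`1, 2, …, 2, 1`. By the product-to-sum formula this reduces to the weighted sum of `cos(jπp/N)`,
which is `2N` when `2N ∣ p`; otherwise multiplying it by `sin(πp/2N) ≠ 0` telescopes to
`cos(πp/2N) sin(πp) = 0`.
-/

open Finset

lemma sum_range_succ_trapezoid_weight {R : Type*} [Semiring R] {N : ℕ} (hN : 1 ≤ N)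
    (g : ℕ → R) :
    ∑ j ∈ range (N + 1), (if 0 < j ∧ j < N then (2 : R) else 1) * g j =
      ∑ j ∈ range N, (g j + g (j + 1)) := by
  obtain ⟨n, rfl⟩ := Nat.exists_eq_add_of_le' hN
  have interior : ∑ j ∈ range n, (if 0 < j + 1 ∧ j + 1 < n + 1 then (2 : R) else 1) * g (j + 1) =
      ∑ j ∈ range n, (g (j + 1) + g (j + 1)) :=
    sum_congr rfl fun j hj => by
      rw [if_pos ⟨j.succ_pos, by simpa using mem_range.mp hj⟩, two_mul]
  conv_rhs => rw [sum_add_distrib, sum_range_succ' g, sum_range_succ (fun j => g (j + 1))]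
  rw [sum_range_succ', sum_range_succ, interior, sum_add_distrib]
  simp only [lt_irrefl, and_false, if_false, false_and, one_mul]
  abel

lemma sin_half_mul_sum_range_cos_add_cos (θ : ℝ) (n : ℕ) :
    sin (θ / 2) * ∑ j ∈ range n, (cos (j * θ) + cos ((j + 1) * θ)) = cos (θ / 2) * sin (n * θ) := by
  have telescope : ∀ j : ℕ, sin (θ / 2) * (cos (j * θ) + cos ((j + 1) * θ)) =
      cos (θ / 2) * (sin ((j + 1) * θ) - sin (j * θ)) := by
    intro j
    rw [show (j : ℝ) * θ = (j + 1 / 2) * θ - θ / 2 by ring,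
      show ((j : ℝ) + 1) * θ = (j + 1 / 2) * θ + θ / 2 by ring, cos_add, cos_sub, sin_add, sin_sub]
    ring
  induction n with
  | zero => simp
  | succ n ih =>
    rw [sum_range_succ, mul_add, ih, telescope]
    push_cast
    ring

lemma sin_half_mul_sum_trapezoid_cos {N : ℕ} (hN : 1 ≤ N) (θ : ℝ) :
    sin (θ / 2) * ∑ j ∈ range (N + 1), (if 0 < j ∧ j < N then (2 : ℝ) else 1) * cos (j * θ) =
      cos (θ / 2) * sin (N * θ) := by
  rw [sum_range_succ_trapezoid_weight hN (fun j => cos (j * θ))]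
  push_cast
  exact sin_half_mul_sum_range_cos_add_cos θ N

lemma sum_trapezoid_cos_int_mul_pi_div {N : ℕ} (hN : 1 ≤ N) (p : ℤ) :
    ∑ j ∈ range (N + 1), (if 0 < j ∧ j < N then (2 : ℝ) else 1) * cos (j * (p * π / N)) =
      if 2 * (N : ℤ) ∣ p then 2 * (N : ℝ) else 0 := by
  have hN0 : (N : ℝ) ≠ 0 := by positivity
  split_ifs with hp
  · obtain ⟨q, rfl⟩ := hp
    have cos_eq_one : ∀ j : ℕ, cos (j * (((2 * N * q : ℤ) : ℝ) * π / N)) = 1 := fun j => by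
      rw [show (j : ℝ) * (((2 * N * q : ℤ) : ℝ) * π / N) = ((j * q : ℤ) : ℝ) * (2 * π) by
        push_cast; field_simp]
      exact cos_int_mul_two_pi _
    simp only [cos_eq_one]
    rw [sum_range_succ_trapezoid_weight hN (fun _ => (1 : ℝ))]
    simp only [sum_const, card_range, nsmul_eq_mul]
    ring
  · have sin_half_ne_zero : sin ((p * π / N) / 2) ≠ 0 := fun h => by
      obtain ⟨n, hn⟩ := sin_eq_zero_iff.mp h
      refine hp ⟨n, ?_⟩
      have : (p : ℝ) = 2 * N * n := by
        field_simp at hn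
        nlinarith [pi_pos]
      exact_mod_cast this
    have sin_N_mul : sin (N * (p * π / N)) = 0 := by
      rw [show (N : ℝ) * (p * π / N) = p * π by field_simp]
      exact sin_int_mul_pi p
    have key := sin_half_mul_sum_trapezoid_cos hN (p * π / N)
    rw [sin_N_mul, mul_zero] at key
    exact (mul_eq_zero.mp key).resolve_left sin_half_ne_zero

lemma two_mul_natCast_dvd_add_iff {N k m : ℕ} (hk : k ≤ N) (hm : m ≤ N) :
    2 * (N : ℤ) ∣ k + m ↔ k = 0 ∧ m = 0 ∨ k = N ∧ m = N := by
  constructor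
  · intro h
    rcases Nat.eq_zero_or_pos (k + m) with hkm | hkm
    · omega
    · have := Int.eq_zero_of_abs_lt_dvd (dvd_sub_self_right.mpr h) (by rw [abs_lt]; omega)
      omega
  · rintro (⟨rfl, rfl⟩ | ⟨rfl, rfl⟩)
    · simp
    · exact ⟨1, by ring⟩

lemma two_mul_natCast_dvd_sub_iff {N k m : ℕ} (hN : 1 ≤ N) (hk : k ≤ N) (hm : m ≤ N) :
    2 * (N : ℤ) ∣ k - m ↔ k = m := by
  constructor
  · intro h
    have := Int.eq_zero_of_abs_lt_dvd h (by rw [abs_lt]; omega)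
    omega
  · rintro rfl
    simp

theorem trapezoid_orthogonal_cos_chebyshev_points {N : ℕ} (hN : 1 ≤ N) {k m : ℕ}
    (hk : k ≤ N) (hm : m ≤ N) :
    (if k = 0 ∨ k = N then (1 : ℝ) / 2 else 1) *
        ∑ j ∈ range (N + 1), (if 0 < j ∧ j < N then (2 : ℝ) else 1) *
          (cos (j * (π * k / N)) * cos (j * (π * m / N))) =
      if k = m then (N : ℝ) else 0 := by
  have product_to_sum : ∀ j : ℕ, cos (j * (π * k / N)) * cos (j * (π * m / N)) =
      (cos (j * (((k + m : ℤ) : ℝ) * π / N)) + cos (j * (((k - m : ℤ) : ℝ) * π / N))) / 2 := by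
    intro j
    rw [show (j : ℝ) * (((k + m : ℤ) : ℝ) * π / N) = j * (π * k / N) + j * (π * m / N) by
        push_cast; ring,
      show (j : ℝ) * (((k - m : ℤ) : ℝ) * π / N) = j * (π * k / N) - j * (π * m / N) by
        push_cast; ring, cos_add, cos_sub]
    ring
  have weighted_product_to_sum :
      ∑ j ∈ range (N + 1), (if 0 < j ∧ j < N then (2 : ℝ) else 1) *
          (cos (j * (π * k / N)) * cos (j * (π * m / N))) =
        (∑ j ∈ range (N + 1), (if 0 < j ∧ j < N then (2 : ℝ) else 1) *
            cos (j * (((k + m : ℤ) : ℝ) * π / N)) +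
          ∑ j ∈ range (N + 1), (if 0 < j ∧ j < N then (2 : ℝ) else 1) *
            cos (j * (((k - m : ℤ) : ℝ) * π / N))) / 2 := by
    rw [← sum_add_distrib, sum_div]
    exact sum_congr rfl fun j _ => by rw [product_to_sum]; ring
  rw [weighted_product_to_sum, sum_trapezoid_cos_int_mul_pi_div hN,
    sum_trapezoid_cos_int_mul_pi_div hN]
  simp only [two_mul_natCast_dvd_add_iff hk hm, two_mul_natCast_dvd_sub_iff hN hk hm]
  split_ifs <;> first | omega | ring

/-- Interpolation property of the Chebyshev coefficient formula: the polynomial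
`I_N(f)(z) = Σ_{j=0}^{N} c_j·T_j(z)` with coefficients
`c_j = (2^{1_{0<j<N}}/N)·Σ''_{k=0}^{N} f(z_k)·T_j(z_k)` (the `k = 0` and `k = N`
summands halved) interpolates `f` at the Chebyshev points `z_k = cos(πk/N)`. -/
theorem chebyshev_coefficients_interpolate
    (N : ℕ) (hN : 1 ≤ N) (f : ℝ → ℝ)
    (z : ℕ → ℝ) (hz : ∀ k : ℕ, z k = Real.cos (Real.pi * k / N))
    (c : ℕ → ℝ)
    (hc : ∀ j : ℕ, c j = ((if 0 < j ∧ j < N then (2 : ℝ) else 1) / N) *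
      ∑ k ∈ Finset.range (N + 1),
        (if k = 0 ∨ k = N then (1 : ℝ) / 2 else 1) * f (z k) *
          (Polynomial.Chebyshev.T ℝ (j : ℤ)).eval (z k)) :
    ∀ m : ℕ, m ≤ N →
      (∑ j ∈ Finset.range (N + 1), c j * (Polynomial.Chebyshev.T ℝ (j : ℤ)).eval (z m)) =
        f (z m) := by
  intro m hm
  have hN0 : (N : ℝ) ≠ 0 := by positivity
  simp only [hc, hz, Chebyshev.T_real_cos, Int.cast_natCast]
  calc _ = ∑ k ∈ range (N + 1), f (cos (π * k / N)) / N *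
          ((if k = 0 ∨ k = N then (1 : ℝ) / 2 else 1) *
            ∑ j ∈ range (N + 1), (if 0 < j ∧ j < N then (2 : ℝ) else 1) *
              (cos (j * (π * k / N)) * cos (j * (π * m / N)))) := by
        simp only [sum_mul, mul_sum]
        rw [sum_comm]
        exact sum_congr rfl fun k _ => sum_congr rfl fun j _ => by ring
    _ = ∑ k ∈ range (N + 1), f (cos (π * k / N)) / N * if k = m then (N : ℝ) else 0 :=
        sum_congr rfl fun k hk => by
          rw [trapezoid_orthogonal_cos_chebyshev_points hN (mem_range_succ_iff.mp hk) hm]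
    _ = f (cos (π * m / N)) := by
        simp [mul_ite, hm, hN0]
end
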